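/- arXiv:gr-qc/0406019 — 6 statements merged into one kernel-verified Lean document; each statement's English description precedes it below -/
import Mathlib

section
/- Let n ≥ 1 and fix a finite family of linear symmetries for an object with n indices. Assume the symmetries are compatible in every dimension k ≥ 1. Then there exists a polynomial P with rational coefficients of degree at most n such that for every dimension k ≥ 1 the number of independent components satisfies f(k) = P(k). -/
/-- The subspace of indexed objects `A : (Fin n → Fin k) → ℝ` satisfying the
homogeneous system induced by a family of `s` linear symmetries, the `l`-th
symmetry having `p l` terms with coefficients `a l j` and permutations `π l j`:
for every index assignment `ι`, `∑ j, a l j * A (ι ∘ π l j) = 0`. -/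
def solSpace (n k s : ℕ) (p : Fin s → ℕ)
    (a : (l : Fin s) → Fin (p l) → ℝ)
    (π : (l : Fin s) → Fin (p l) → Equiv.Perm (Fin n)) :
    Submodule ℝ ((Fin n → Fin k) → ℝ) where
  carrier := {A | ∀ (l : Fin s) (ι : Fin n → Fin k),
    ∑ j : Fin (p l), a l j * A (ι ∘ (π l j)) = 0}
  add_mem' := by
    intro A B hA hB l ι
    have hA' := hA l ι
    have hB' := hB l ι
    simp only [Pi.add_apply, mul_add, Finset.sum_add_distrib]
    rw [hA', hB', add_zero]
  zero_mem' := by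
    intro l ι
    simp
  smul_mem' := by
    intro c A hA l ι
    have hA' := hA l ι
    simp only [Pi.smul_apply, smul_eq_mul, mul_left_comm, ← Finset.mul_sum]
    rw [hA', mul_zero]

/-!
Every index assignment `ι : Fin n → Fin k` factors uniquely as a surjection `Fin n ↠ t` onto
its image `t ⊆ Fin k` followed by the inclusion. Permuting the indices does not change the
image, so the homogeneous system splits into independent blocks, one for each `t`, and the
block of `t` is a copy of the system on surjections `Fin n ↠ Fin #t`. Hence
`f(k) = ∑ₘ (k choose m) wₘ`, where `wₘ` is the dimension of the solution space on surjections
`Fin n ↠ Fin m`; it vanishes for `m > n` since there are no such surjections, and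
`k choose m` is a polynomial of degree `m` in `k`.
-/

open Finset Polynomial

def surjPrecomp {n : ℕ} {β : Type*} (τ : {τ : Fin n → β // Function.Surjective τ})
    (σ : Equiv.Perm (Fin n)) : {τ : Fin n → β // Function.Surjective τ} :=
  ⟨τ.1 ∘ σ, τ.2.comp σ.surjective⟩

def imageFiberEquivSurj {n : ℕ} {α : Type*} [DecidableEq α] (t : Finset α) :
    {ι : Fin n → α // univ.image ι = t} ≃ {τ : Fin n → t // Function.Surjective τ} where
  toFun ι := ⟨fun i => ⟨ι.1 i, ι.2.subset (mem_image_of_mem ι.1 (mem_univ i))⟩, fun x => by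
    obtain ⟨i, -, hi⟩ := mem_image.1 (ι.2.symm.subset x.2)
    exact ⟨i, Subtype.ext hi⟩⟩
  invFun τ := ⟨Subtype.val ∘ τ.1, by
    ext x
    simp only [mem_image, mem_univ, true_and, Function.comp_apply]
    refine ⟨?_, fun hx => ?_⟩
    · rintro ⟨i, rfl⟩
      exact (τ.1 i).2
    · obtain ⟨i, hi⟩ := τ.2 ⟨x, hx⟩
      exact ⟨i, congrArg Subtype.val hi⟩⟩
  left_inv _ := rfl
  right_inv _ := rfl

def sigmaSurjEquiv (n : ℕ) (α : Type*) [DecidableEq α] :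
    (Σ t : Finset α, {τ : Fin n → t // Function.Surjective τ}) ≃ (Fin n → α) :=
  (Equiv.sigmaCongrRight fun t => (imageFiberEquivSurj t).symm).trans
    (Equiv.sigmaFiberEquiv fun ι => univ.image ι)

def surjEquivOfEquiv {n : ℕ} {β γ : Type*} (e : β ≃ γ) :
    {τ : Fin n → β // Function.Surjective τ} ≃ {τ : Fin n → γ // Function.Surjective τ} :=
  Equiv.subtypeEquiv ((Equiv.refl _).arrowCongr e) fun τ => e.comp_surjective τ |>.symm

theorem exists_natDegree_le_eval_eq_sum_choose_mul {n : ℕ} (w : ℕ → ℕ)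
    (hw : ∀ m, n < m → w m = 0) :
    ∃ P : ℚ[X], P.natDegree ≤ n ∧ ∀ k : ℕ,
      P.eval (k : ℚ) = ∑ m ∈ range (k + 1), (k.choose m * w m : ℚ) := by
  refine ⟨∑ m ∈ range (n + 1), C ((w m : ℚ) / m.factorial) * descPochhammer ℚ m,
    natDegree_sum_le_of_forall_le _ _ fun m hm => ?_, fun k => ?_⟩
  · refine (natDegree_C_mul_le _ _).trans ?_
    rw [descPochhammer_natDegree]
    exact Nat.lt_succ_iff.mp (mem_range.mp hm)
  · have hterm : ∀ m, (w m : ℚ) / m.factorial * (descPochhammer ℚ m).eval (k : ℚ)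
        = k.choose m * w m := fun m => by
      rw [descPochhammer_eval_eq_descFactorial, Nat.descFactorial_eq_factorial_mul_choose]
      push_cast
      field_simp
    -- Both sums equal the sum over `range (n + k + 1)`: the extra terms vanish.
    have hn : ∑ m ∈ range (n + 1), (k.choose m * w m : ℚ)
        = ∑ m ∈ range (n + k + 1), (k.choose m * w m : ℚ) :=
      sum_subset (range_subset_range.2 (by omega)) fun m _ hm => by
        rw [hw m (by simpa using hm), Nat.cast_zero, mul_zero]
    have hk : ∑ m ∈ range (k + 1), (k.choose m * w m : ℚ)
        = ∑ m ∈ range (n + k + 1), (k.choose m * w m : ℚ) :=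
      sum_subset (range_subset_range.2 (by omega)) fun m _ hm => by
        rw [Nat.choose_eq_zero_of_lt (by simpa using hm), Nat.cast_zero, zero_mul]
    simp only [eval_finsetSum, eval_mul, eval_C, hterm, hn, hk]

section SolutionSpaces

variable {n s : ℕ} {p : Fin s → ℕ} (a : (l : Fin s) → Fin (p l) → ℝ)
  (π : (l : Fin s) → Fin (p l) → Equiv.Perm (Fin n))

/-- The system of `solSpace` on an arbitrary type `X` of index patterns, `act x σ` playing the
role of `ι ∘ σ`. -/
def solSpaceOn {X : Type*} (act : X → Equiv.Perm (Fin n) → X) : Submodule ℝ (X → ℝ) where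
  carrier := {A | ∀ l x, ∑ j, a l j * A (act x (π l j)) = 0}
  add_mem' {A B} hA hB l x := by
    simp only [Pi.add_apply, mul_add, sum_add_distrib, hA l x, hB l x, add_zero]
  zero_mem' l x := by simp
  smul_mem' c A hA l x := by
    simp only [Pi.smul_apply, smul_eq_mul, mul_left_comm _ c, ← mul_sum, hA l x, mul_zero]

theorem solSpace_eq_solSpaceOn (k : ℕ) :
    solSpace n k s p a π = solSpaceOn a π (fun (ι : Fin n → Fin k) σ => ι ∘ σ) :=
  rfl

theorem finrank_solSpaceOn_congr {X Y : Type*} {actX : X → Equiv.Perm (Fin n) → X}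
    {actY : Y → Equiv.Perm (Fin n) → Y} (e : X ≃ Y)
    (he : ∀ x σ, e (actX x σ) = actY (e x) σ) :
    Module.finrank ℝ (solSpaceOn a π actX) = Module.finrank ℝ (solSpaceOn a π actY) := by
  have hmap : (solSpaceOn a π actX).map (LinearEquiv.funCongrLeft ℝ ℝ e.symm).toLinearMap
      = solSpaceOn a π actY := by
    ext B
    rw [Submodule.mem_map_equiv]
    change (∀ l x, ∑ j, a l j * B (e.symm.symm (actX x (π l j))) = 0) ↔ _
    simp only [Equiv.symm_symm, he]
    exact ⟨fun h l y => by simpa using h l (e.symm y), fun h l x => h l (e x)⟩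
  rw [← hmap, LinearEquiv.finrank_map_eq]

theorem finrank_solSpaceOn_sigma {I : Type*} [Fintype I] {Y : I → Type*} [∀ i, Finite (Y i)]
    (act : ∀ i, Y i → Equiv.Perm (Fin n) → Y i) :
    Module.finrank ℝ (solSpaceOn a π (fun (x : Σ i, Y i) σ => ⟨x.1, act x.1 x.2 σ⟩))
      = ∑ i, Module.finrank ℝ (solSpaceOn a π (act i)) := by
  let e : solSpaceOn a π (fun (x : Σ i, Y i) σ => ⟨x.1, act x.1 x.2 σ⟩)
      ≃ₗ[ℝ] Π i, solSpaceOn a π (act i) :=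
    { toFun A i := ⟨fun y => A.1 ⟨i, y⟩, fun l y => A.2 l ⟨i, y⟩⟩
      map_add' _ _ := rfl
      map_smul' _ _ := rfl
      invFun B := ⟨fun x => (B x.1).1 x.2, fun l x => (B x.1).2 l x.2⟩
      left_inv _ := rfl
      right_inv _ := rfl }
  rw [e.finrank_eq, Module.finrank_pi_fintype]

noncomputable def surjFinrank (m : ℕ) : ℕ :=
  Module.finrank ℝ (solSpaceOn a π (surjPrecomp (β := Fin m)))

theorem surjFinrank_eq_zero_of_lt {m : ℕ} (h : n < m) : surjFinrank a π m = 0 := by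
  have : IsEmpty {τ : Fin n → Fin m // Function.Surjective τ} :=
    ⟨fun τ => absurd (Fintype.card_le_of_surjective _ τ.2) (by simpa using h)⟩
  exact Module.finrank_zero_of_subsingleton

theorem finrank_solSpaceOn_comp_eq_sum_finset {α : Type*} [Fintype α] [DecidableEq α] :
    Module.finrank ℝ (solSpaceOn a π (fun (ι : Fin n → α) σ => ι ∘ σ))
      = ∑ t : Finset α, surjFinrank a π #t := by
  rw [← finrank_solSpaceOn_congr a π (sigmaSurjEquiv n α)
      (actX := fun x σ => ⟨x.1, surjPrecomp x.2 σ⟩) fun _ _ => rfl,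
    finrank_solSpaceOn_sigma a π fun (t : Finset α) => surjPrecomp (β := t)]
  exact sum_congr rfl fun t _ =>
    finrank_solSpaceOn_congr a π (surjEquivOfEquiv t.equivFin) fun _ _ => rfl

theorem finrank_solSpace_eq_sum_choose (k : ℕ) :
    Module.finrank ℝ (solSpace n k s p a π)
      = ∑ m ∈ range (k + 1), k.choose m * surjFinrank a π m := by
  rw [solSpace_eq_solSpaceOn, finrank_solSpaceOn_comp_eq_sum_finset, ← powerset_univ,
    sum_powerset_apply_card, card_univ, Fintype.card_fin]
  simp only [smul_eq_mul]

end SolutionSpaces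

theorem numIndepComponents_is_polynomial_general
    (n s : ℕ) (p : Fin s → ℕ)
    (a : (l : Fin s) → Fin (p l) → ℝ)
    (π : (l : Fin s) → Fin (p l) → Equiv.Perm (Fin n)) :
    ∃ P : Polynomial ℚ, P.natDegree ≤ n ∧
      ∀ k : ℕ, 1 ≤ k →
        (Module.finrank ℝ (solSpace n k s p a π) : ℚ) = P.eval (k : ℚ) := by
  obtain ⟨P, hdeg, hP⟩ :=
    exists_natDegree_le_eval_eq_sum_choose_mul _ fun _ => surjFinrank_eq_zero_of_lt a π
  refine ⟨P, hdeg, fun k _ => ?_⟩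
  rw [hP]
  exact_mod_cast finrank_solSpace_eq_sum_choose a π k

/-- if the symmetries are compatible in every dimension `k ≥ 1`,
then the number of independent components `f(k)` is given by a polynomial with
rational coefficients of degree at most `n`. -/
theorem numIndepComponents_is_polynomial
    (n s : ℕ) (hn : 1 ≤ n) (p : Fin s → ℕ)
    (a : (l : Fin s) → Fin (p l) → ℝ)
    (π : (l : Fin s) → Fin (p l) → Equiv.Perm (Fin n))
    (b : Fin s → ℝ)
    (hcompat : ∀ k : ℕ, 1 ≤ k → ∃ A : (Fin n → Fin k) → ℝ,
      ∀ (l : Fin s) (ι : Fin n → Fin k),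
        ∑ j : Fin (p l), a l j * A (ι ∘ (π l j)) = b l) :
    ∃ P : Polynomial ℚ, P.natDegree ≤ n ∧
      ∀ k : ℕ, 1 ≤ k →
        (Module.finrank ℝ (solSpace n k s p a π) : ℚ) = P.eval (k : ℚ) :=
  numIndepComponents_is_polynomial_general n s p a π
end

section
/- Let n ≥ 1 and fix a finite family of linear symmetries for an object with n indices. For every dimension k > n, the number of independent components satisfies the recursion f(k) = Σ_{j=1}^{k-1} (−1)^{j−1} · f(k−j) · C(k, j), where C(k, j) denotes the binomial coefficient. -/
/-!
The symmetries only relate an index assignment `ι` to the assignments `ι ∘ σ`, which have the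
same image. So a solution in dimension `k` splits into independent pieces, one for each subset `S`
of `Fin k`, the piece on `S` being a solution on `S` that vanishes off the surjective assignments.
If `g m` is the dimension of the space of such solutions on an `m`-element set, then
`f k = ∑ m, C(k, m) * g m`, with `g 0 = 0` since `n ≥ 1` and `g m = 0` for `m > n`. The recursion
is an identity for binomial transforms of sequences vanishing at `0` and at `k`: it follows from
`C(k, j) * C(k - j, m) = C(k, m) * C(k - m, j)` and `∑_{j=1}^{r} (-1)^(j-1) * C(r, j) = 1`
for `r ≥ 1`.
-/

open Finset Module Function

theorem Nat.choose_mul_choose_sub_comm (k j m : ℕ) :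
    k.choose j * (k - j).choose m = k.choose m * (k - m).choose j := by
  rcases le_or_gt (j + m) k with h | h
  · have hj := Nat.choose_mul (n := k) (Nat.le_add_right j m)
    have hm := Nat.choose_mul (n := k) (Nat.le_add_left m j)
    simp only [Nat.add_sub_cancel_left, Nat.add_sub_cancel] at hj hm
    rw [← hj, ← hm, Nat.choose_symm_add]
  · have hzero : ∀ x y, k < x + y → k.choose x * (k - x).choose y = 0 := fun x y hxy => by
      rcases le_or_gt x k with hx | hx
      · rw [Nat.choose_eq_zero_of_lt (n := k - x) (by omega), mul_zero]
      · rw [Nat.choose_eq_zero_of_lt hx, zero_mul]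
    rw [hzero j m h, hzero m j (by omega)]

theorem Int.alternating_sum_Icc_choose {r N : ℕ} (hr : r ≠ 0) (hrN : r ≤ N) :
    ∑ j ∈ Icc 1 N, (-1 : ℤ) ^ (j - 1) * r.choose j = 1 := by
  have hzero : ∑ j ∈ Finset.range (N + 1), (-1 : ℤ) ^ j * r.choose j = 0 := by
    rw [← Int.alternating_sum_range_choose_of_ne hr]
    refine (sum_subset (range_subset_range.mpr (by omega)) fun j _ hj => ?_).symm
    rw [Nat.choose_eq_zero_of_lt (by simpa using hj), Nat.cast_zero, mul_zero]
  rw [range_eq_Ico, sum_eq_sum_Ico_succ_bot (Nat.succ_pos N), zero_add, Nat.succ_eq_add_one,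
    Ico_add_one_right_eq_Icc] at hzero
  have hshift : ∀ j ∈ Icc 1 N, (-1 : ℤ) ^ (j - 1) * r.choose j = -((-1) ^ j * r.choose j) := by
    intro j hj
    rw [← Nat.sub_add_cancel (mem_Icc.mp hj).1, pow_succ, Nat.add_sub_cancel]
    ring
  rw [sum_congr rfl hshift, sum_neg_distrib]
  simp only [pow_zero, Nat.choose_zero_right, Nat.cast_one, one_mul] at hzero
  linarith

def binomialTransform {R : Type*} [CommRing R] (g : ℕ → R) (k : ℕ) : R :=
  ∑ m ∈ range (k + 1), k.choose m * g m

variable {R : Type*} [CommRing R]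

theorem binomialTransform_eq_sum_range (g : ℕ → R) {k N : ℕ} (h : k ≤ N) :
    binomialTransform g k = ∑ m ∈ range (N + 1), k.choose m * g m :=
  sum_subset (range_subset_range.mpr (by omega)) fun m _ hm => by
    rw [Nat.choose_eq_zero_of_lt (by simpa using hm), Nat.cast_zero, zero_mul]

theorem binomialTransform_eq_alternating_sum (g : ℕ → R) {k : ℕ} (h0 : g 0 = 0) (hk : g k = 0) :
    binomialTransform g k =
      ∑ j ∈ Icc 1 (k - 1), (-1) ^ (j - 1) * binomialTransform g (k - j) * k.choose j := by
  have hinner : ∀ m ∈ range (k + 1),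
      k.choose m * g m * ∑ j ∈ Icc 1 (k - 1), (-1 : R) ^ (j - 1) * (k - m).choose j =
        k.choose m * g m := by
    intro m hm
    rw [mem_range] at hm
    rcases eq_or_ne m 0 with rfl | hm0
    · simp [h0]
    rcases eq_or_ne m k with rfl | hmk
    · simp [hk]
    have h := congrArg (Int.cast : ℤ → R)
      (Int.alternating_sum_Icc_choose (r := k - m) (N := k - 1) (by omega) (by omega))
    push_cast at h
    rw [h, mul_one]
  calc binomialTransform g k = ∑ m ∈ range (k + 1), k.choose m * g m *
        ∑ j ∈ Icc 1 (k - 1), (-1 : R) ^ (j - 1) * (k - m).choose j :=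
        (sum_congr rfl hinner).symm
    _ = ∑ j ∈ Icc 1 (k - 1), ∑ m ∈ range (k + 1),
          (-1) ^ (j - 1) * ((k.choose j * (k - j).choose m : ℕ) : R) * g m := by
        simp_rw [mul_sum]
        rw [sum_comm]
        refine sum_congr rfl fun j _ => sum_congr rfl fun m _ => ?_
        rw [Nat.choose_mul_choose_sub_comm]
        push_cast
        ring
    _ = _ := by
        refine sum_congr rfl fun j _ => ?_
        rw [binomialTransform_eq_sum_range g (Nat.sub_le k j), mul_sum, sum_mul]
        refine sum_congr rfl fun m _ => ?_
        push_cast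
        ring

section
variable {n s : ℕ} {p : Fin s → ℕ} (a : (l : Fin s) → Fin (p l) → ℝ)
  (π : (l : Fin s) → Fin (p l) → Equiv.Perm (Fin n))

def solSubmodule (β : Type*) : Submodule ℝ ((Fin n → β) → ℝ) :=
  ⨅ (l : Fin s) (ι : Fin n → β), LinearMap.ker (∑ j, a l j • LinearMap.proj (ι ∘ π l j))

def surjSolSubmodule (β : Type*) : Submodule ℝ ((Fin n → β) → ℝ) :=
  solSubmodule a π β ⊓ ⨅ (ι : Fin n → β) (_ : ¬ Surjective ι), LinearMap.ker (LinearMap.proj ι)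

variable {a π} {β γ : Type*}

theorem mem_solSubmodule {A : (Fin n → β) → ℝ} :
    A ∈ solSubmodule a π β ↔ ∀ l (ι : Fin n → β), ∑ j, a l j * A (ι ∘ π l j) = 0 := by
  simp [solSubmodule, Submodule.mem_iInf]

theorem mem_surjSolSubmodule {A : (Fin n → β) → ℝ} :
    A ∈ surjSolSubmodule a π β ↔
      A ∈ solSubmodule a π β ∧ ∀ ι : Fin n → β, ¬ Surjective ι → A ι = 0 := by
  simp [surjSolSubmodule, Submodule.mem_iInf]

theorem solSpace_eq_solSubmodule (k : ℕ) : solSpace n k s p a π = solSubmodule a π (Fin k) := by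
  ext A
  rw [mem_solSubmodule]
  rfl

theorem finrank_surjSolSubmodule_eq_zero (h : ∀ ι : Fin n → β, ¬ Surjective ι) :
    finrank ℝ (surjSolSubmodule a π β) = 0 := by
  have hbot : surjSolSubmodule a π β = ⊥ := (Submodule.eq_bot_iff _).mpr fun _ hA =>
    funext fun ι => (mem_surjSolSubmodule.mp hA).2 ι (h ι)
  rw [hbot, finrank_bot]

theorem comp_mem_surjSolSubmodule {A : (Fin n → γ) → ℝ} (hA : A ∈ surjSolSubmodule a π γ)
    (e : β ≃ γ) : (fun ι => A (e ∘ ι)) ∈ surjSolSubmodule a π β := by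
  rw [mem_surjSolSubmodule, mem_solSubmodule] at hA ⊢
  exact ⟨fun l ι => hA.1 l (e ∘ ι), fun ι hι => hA.2 _ (hι ∘ (e.comp_surjective ι).mp)⟩

variable (a π) in
def surjSolSubmoduleCongr (e : β ≃ γ) : surjSolSubmodule a π γ ≃ₗ[ℝ] surjSolSubmodule a π β where
  toFun A := ⟨fun ι => A.1 (e ∘ ι), comp_mem_surjSolSubmodule A.2 e⟩
  invFun B := ⟨fun ι => B.1 (e.symm ∘ ι), comp_mem_surjSolSubmodule B.2 e.symm⟩
  map_add' _ _ := rfl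
  map_smul' _ _ := rfl
  left_inv A := by ext ι; simp [← Function.comp_assoc]
  right_inv B := by ext ι; simp [← Function.comp_assoc]

section Pieces
variable [DecidableEq β]

def imageFactorization (ι : Fin n → β) : Fin n → univ.image ι :=
  fun i => ⟨ι i, mem_image_of_mem ι (mem_univ i)⟩

theorem surjective_imageFactorization (ι : Fin n → β) : Surjective (imageFactorization ι) := by
  rintro ⟨b, hb⟩
  obtain ⟨i, -, rfl⟩ := mem_image.mp hb
  exact ⟨i, rfl⟩

theorem image_val_comp_of_surjective {S : Finset β} {κ : Fin n → S} (hκ : Surjective κ) :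
    univ.image (Subtype.val ∘ κ) = S := by
  ext b
  simp only [mem_image, mem_univ, true_and, comp_apply]
  refine ⟨fun ⟨i, hi⟩ => hi ▸ (κ i).2, fun hb => ?_⟩
  obtain ⟨i, hi⟩ := hκ ⟨b, hb⟩
  exact ⟨i, by rw [hi]⟩

theorem image_comp_perm (ι : Fin n → β) (σ : Equiv.Perm (Fin n)) :
    univ.image (ι ∘ σ) = univ.image ι := by
  rw [image_comp, image_univ_equiv]

def toPiece (A : (Fin n → β) → ℝ) (S : Finset β) : (Fin n → S) → ℝ :=
  fun κ => if Surjective κ then A (Subtype.val ∘ κ) else 0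

def ofPieces (B : (S : Finset β) → (Fin n → S) → ℝ) : (Fin n → β) → ℝ :=
  fun ι => B (univ.image ι) (imageFactorization ι)

theorem ofPieces_eq_of_factorization {B : (S : Finset β) → (Fin n → S) → ℝ} {ι : Fin n → β}
    {S : Finset β} (hS : univ.image ι = S) {κ : Fin n → S} (hκ : Subtype.val ∘ κ = ι) :
    ofPieces B ι = B S κ := by
  subst hS
  exact congrArg _ (funext fun i => Subtype.ext (congrFun hκ i).symm)

theorem toPiece_mem {A : (Fin n → β) → ℝ} (hA : A ∈ solSubmodule a π β) (S : Finset β) :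
    toPiece A S ∈ surjSolSubmodule a π S := by
  rw [mem_surjSolSubmodule, mem_solSubmodule]
  refine ⟨fun l κ => ?_, fun κ hκ => if_neg hκ⟩
  by_cases hκ : Surjective κ
  · simp only [toPiece, hκ.comp (π l _).surjective, if_true]
    exact mem_solSubmodule.mp hA l (Subtype.val ∘ κ)
  · have : ∀ j, ¬ Surjective (κ ∘ π l j) := fun j h => hκ h.of_comp
    simp [toPiece, this]

theorem ofPieces_mem {B : (S : Finset β) → (Fin n → S) → ℝ}
    (hB : ∀ S : Finset β, B S ∈ surjSolSubmodule a π S) : ofPieces B ∈ solSubmodule a π β := by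
  refine mem_solSubmodule.mpr fun l ι => ?_
  have hterm : ∀ j, ofPieces B (ι ∘ π l j) = B (univ.image ι) (imageFactorization ι ∘ π l j) :=
    fun j => ofPieces_eq_of_factorization (image_comp_perm ι (π l j)) rfl
  simp only [hterm]
  exact mem_solSubmodule.mp (mem_surjSolSubmodule.mp (hB _)).1 l _

theorem ofPieces_toPiece (A : (Fin n → β) → ℝ) : ofPieces (toPiece A) = A :=
  funext fun ι => if_pos (surjective_imageFactorization ι)

theorem toPiece_ofPieces {B : (S : Finset β) → (Fin n → S) → ℝ}
    (hB : ∀ S κ, ¬ Surjective κ → B S κ = 0) (S : Finset β) : toPiece (ofPieces B) S = B S := by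
  funext κ
  by_cases hκ : Surjective κ
  · exact (if_pos hκ).trans (ofPieces_eq_of_factorization (image_val_comp_of_surjective hκ) rfl)
  · exact (if_neg hκ).trans (hB S κ hκ).symm

variable (a π β) in
def solSubmoduleEquivPi : solSubmodule a π β ≃ₗ[ℝ] ((S : Finset β) → surjSolSubmodule a π S) where
  toFun A S := ⟨toPiece A.1 S, toPiece_mem A.2 S⟩
  map_add' A B := by
    ext S κ
    simp only [toPiece, Submodule.coe_add, Pi.add_apply]
    split_ifs <;> simp
  map_smul' c A := by
    ext S κ
    simp only [toPiece, Submodule.coe_smul, Pi.smul_apply]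
    split_ifs <;> simp
  invFun B := ⟨ofPieces fun S => (B S).1, ofPieces_mem fun S => (B S).2⟩
  left_inv A := Subtype.ext (ofPieces_toPiece A.1)
  right_inv B := funext fun S => Subtype.ext <|
    toPiece_ofPieces (fun S => (mem_surjSolSubmodule.mp (B S).2).2) S

theorem finrank_solSubmodule [Fintype β] :
    finrank ℝ (solSubmodule a π β) = ∑ m ∈ range (Fintype.card β + 1),
      (Fintype.card β).choose m * finrank ℝ (surjSolSubmodule a π (Fin m)) := by
  have h := sum_powerset_apply_card (fun m => finrank ℝ (surjSolSubmodule a π (Fin m)))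
    (x := (univ : Finset β))
  rw [powerset_univ, card_univ] at h
  simp only [smul_eq_mul] at h
  rw [(solSubmoduleEquivPi a π β).finrank_eq, finrank_pi_fintype, ← h]
  exact sum_congr rfl fun S _ => (surjSolSubmoduleCongr a π S.equivFin.symm).finrank_eq

end Pieces
end

/-- for every dimension `k > n`, the number of independent
components satisfies the recursion
`f(k) = ∑_{j=1}^{k-1} (-1)^(j-1) * f(k-j) * C(k,j)`. -/
theorem numIndepComponents_recursion
    (n s : ℕ) (hn : 1 ≤ n) (p : Fin s → ℕ)
    (a : (l : Fin s) → Fin (p l) → ℝ)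
    (π : (l : Fin s) → Fin (p l) → Equiv.Perm (Fin n))
    (k : ℕ) (hk : n < k) :
    (Module.finrank ℝ (solSpace n k s p a π) : ℤ) =
      ∑ j ∈ Finset.Icc 1 (k - 1),
        (-1 : ℤ) ^ (j - 1) * (Module.finrank ℝ (solSpace n (k - j) s p a π)) *
          (Nat.choose k j) := by
  set g : ℕ → ℤ := fun m => finrank ℝ (surjSolSubmodule a π (Fin m))
  have hf : ∀ k, (finrank ℝ (solSpace n k s p a π) : ℤ) = binomialTransform g k := fun k => by
    rw [solSpace_eq_solSubmodule, finrank_solSubmodule, Fintype.card_fin, binomialTransform]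
    push_cast
    rfl
  have hg0 : g 0 = 0 := by
    simp only [g, Nat.cast_eq_zero]
    exact finrank_surjSolSubmodule_eq_zero fun ι _ => Fin.elim0 (ι ⟨0, hn⟩)
  have hgk : g k = 0 := by
    simp only [g, Nat.cast_eq_zero]
    exact finrank_surjSolSubmodule_eq_zero fun ι hι =>
      (Fintype.card_le_of_surjective ι hι).not_gt (by simpa using hk)
  simp only [hf]
  exact binomialTransform_eq_alternating_sum g hg0 hgk
end

section
/- For all natural numbers i, n, k with 0 ≤ i ≤ n ≤ k, the alternating sum Σ_{s=0}^{k−n} (−1)^s · C(k−i+1, n−i+1+s) · C(n−i+s, s) equals 1, where the sum is taken in the integers and C(·,·) denotes the binomial coefficient. -/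
/-!
Put `m = n - i` and `d = k - n`, so the top index is `m + d + 1`, and induct on `d`.
Pascal's rule splits the sum for `d + 1` into the sum for `d` and the sum
`∑ (-1)^s C(m+d+1, m+s) C(m+s, s)`. By trinomial revision the latter is
`C(m+d+1, m) ∑ (-1)^s C(d+1, s)`, which vanishes.
-/

open Finset

theorem Nat.add_choose_add_mul_add_choose (m n s : ℕ) :
    (m + n).choose (m + s) * (m + s).choose s = (m + n).choose m * n.choose s := by
  rw [← Nat.choose_symm_add (a := m) (b := s), Nat.choose_mul (Nat.le_add_right m s),
    Nat.add_sub_cancel_left, Nat.add_sub_cancel_left]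

theorem Int.alternating_sum_add_choose_add_mul_add_choose (m : ℕ) {n : ℕ} (hn : n ≠ 0) :
    ∑ s ∈ Finset.range (n + 1), (-1 : ℤ) ^ s * (m + n).choose (m + s) * (m + s).choose s = 0 := by
  calc ∑ s ∈ Finset.range (n + 1), (-1 : ℤ) ^ s * (m + n).choose (m + s) * (m + s).choose s
      = ∑ s ∈ Finset.range (n + 1), ((m + n).choose m : ℤ) * ((-1) ^ s * n.choose s) := by
        refine sum_congr rfl fun s _ => ?_
        rw [mul_assoc, ← Nat.cast_mul, Nat.add_choose_add_mul_add_choose]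
        push_cast
        ring
    _ = 0 := by rw [← mul_sum, Int.alternating_sum_range_choose_of_ne hn, mul_zero]

theorem Int.alternating_sum_add_succ_choose_mul_add_choose (m d : ℕ) :
    ∑ s ∈ Finset.range (d + 1),
      (-1 : ℤ) ^ s * (m + d + 1).choose (m + 1 + s) * (m + s).choose s = 1 := by
  induction d with
  | zero => simp
  | succ d ih =>
    have pascal (s : ℕ) : ((m + (d + 1) + 1).choose (m + 1 + s) : ℤ) =
        (m + (d + 1)).choose (m + s) + (m + d + 1).choose (m + 1 + s) := by
      rw [show m + 1 + s = m + s + 1 by omega, Nat.choose_succ_succ', ← add_assoc]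
      push_cast
      rfl
    have last_term_vanishes : (m + d + 1).choose (m + 1 + (d + 1)) = 0 :=
      Nat.choose_eq_zero_of_lt (by omega)
    simp only [pascal, add_mul, mul_add, sum_add_distrib,
      Int.alternating_sum_add_choose_add_mul_add_choose m d.succ_ne_zero, zero_add]
    rw [sum_range_succ, last_term_vanishes, ih]
    simp

/-- for `0 ≤ i ≤ n ≤ k`,
`∑_{s=0}^{k-n} (-1)^s * C(k-i+1, n-i+1+s) * C(n-i+s, s) = 1` in the integers. -/
theorem binomial_alternating_sum_eq_one (i n k : ℕ) (hin : i ≤ n) (hnk : n ≤ k) :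
    ∑ s ∈ Finset.range (k - n + 1),
      (-1 : ℤ) ^ s * (Nat.choose (k - i + 1) (n - i + 1 + s)) *
        (Nat.choose (n - i + s) s) = 1 := by
  rw [show k - i = n - i + (k - n) by omega]
  exact Int.alternating_sum_add_succ_choose_mul_add_choose (n - i) (k - n)
end

section
/- For all natural numbers i, n, k with 0 ≤ i ≤ n < k, the rational number (−1)^{n−i} · C(k, i) · C(k−1−i, n−i) equals the Lagrange interpolation coefficient ∏_{j=0, j≠i}^{n} (k−j)/(i−j), where C(·,·) denotes the binomial coefficient and the product is taken in ℚ. -/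
/-!
The factors with `j < i` give `k (k - 1) ⋯ (k - i + 1) / i! = C(k, i)`. Writing `j = i + 1 + t`
with `t < n - i`, each factor with `j > i` is `-((k - 1 - i) - t) / (t + 1)`, and these multiply
to `(-1)^(n-i) C(k - 1 - i, n - i)`.
-/

open Finset

theorem Finset.prod_range_succ_erase {M : Type*} [CommMonoid M] (f : ℕ → M) {i n : ℕ}
    (hin : i ≤ n) :
    ∏ j ∈ (range (n + 1)).erase i, f j =
      (∏ j ∈ range i, f j) * ∏ t ∈ range (n - i), f (i + 1 + t) := by
  have hsplit : (range (n + 1)).erase i = range i ∪ Ico (i + 1) (n + 1) := by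
    ext j
    simp only [mem_erase, mem_range, mem_union, mem_Ico]
    omega
  rw [hsplit, prod_union (disjoint_left.2 fun j hj hj' => by simp_all; omega),
    prod_Ico_eq_prod_range, show n + 1 - (i + 1) = n - i by omega]

section

variable {K : Type*} [Field K] [CharZero K]

namespace Nat

theorem cast_choose_eq_prod_range_div_factorial (a m : ℕ) :
    (a.choose m : K) = (∏ j ∈ range m, ((a : K) - j)) / m ! := by
  rw [cast_choose_eq_descPochhammer_div, descPochhammer_eval_eq_prod_range]

theorem cast_choose_eq_prod_range_div_sub (a m : ℕ) :
    (a.choose m : K) = ∏ j ∈ range m, ((a : K) - j) / ((m : K) - j) := by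
  rw [prod_div_distrib, ← descPochhammer_eval_eq_prod_range m (m : K),
    descPochhammer_eval_eq_descFactorial, descFactorial_self,
    cast_choose_eq_prod_range_div_factorial]

theorem cast_choose_eq_prod_range_div_succ (a m : ℕ) :
    (a.choose m : K) = ∏ j ∈ range m, ((a : K) - j) / (j + 1) := by
  rw [prod_div_distrib, cast_choose_eq_prod_range_div_factorial,
    ← prod_range_add_one_eq_factorial, cast_prod]
  simp only [cast_add, cast_one]

end Nat

theorem prod_range_lagrange_factor_above {i k : ℕ} (hik : i < k) (m : ℕ) :
    ∏ t ∈ range m, ((k : K) - ((i + 1 + t : ℕ) : K)) / ((i : K) - ((i + 1 + t : ℕ) : K)) =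
      (-1) ^ m * ((k - 1 - i).choose m : K) := by
  have hfactor (t : ℕ) :
      ((k : K) - ((i + 1 + t : ℕ) : K)) / ((i : K) - ((i + 1 + t : ℕ) : K)) =
        -1 * ((((k - 1 - i : ℕ) : K) - t) / (t + 1)) := by
    have hnum : (k : K) - ((i + 1 + t : ℕ) : K) = ((k - 1 - i : ℕ) : K) - t := by
      rw [Nat.sub_sub, Nat.cast_sub (by omega : 1 + i ≤ k)]
      push_cast
      ring
    have hden : (i : K) - ((i + 1 + t : ℕ) : K) = -(t + 1) := by
      push_cast
      ring
    rw [hnum, hden, div_neg, neg_one_mul]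
  simp_rw [hfactor, prod_mul_distrib, prod_const, card_range,
    Nat.cast_choose_eq_prod_range_div_succ]

end

/-- for `0 ≤ i ≤ n < k`, the rational number
`(-1)^(n-i) * C(k,i) * C(k-1-i, n-i)` equals the Lagrange interpolation
coefficient `∏_{0 ≤ j ≤ n, j ≠ i} (k - j)/(i - j)`. -/
theorem binomial_eq_lagrange_coefficient (i n k : ℕ) (hin : i ≤ n) (hnk : n < k) :
    (-1 : ℚ) ^ (n - i) * (Nat.choose k i) * (Nat.choose (k - 1 - i) (n - i)) =
      ∏ j ∈ (Finset.range (n + 1)).erase i,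
        ((k : ℚ) - (j : ℚ)) / ((i : ℚ) - (j : ℚ)) := by
  rw [prod_range_succ_erase _ hin, prod_range_lagrange_factor_above (by omega),
    ← Nat.cast_choose_eq_prod_range_div_sub]
  ring
end

section
/- Let n ≥ 1 and fix a finite family of linear symmetries for an object with n indices. If the symmetries are compatible in dimension K (i.e., there exists an indexed object in dimension K satisfying all imposed equations), then they are compatible in every dimension k with 1 ≤ k ≤ K. -/
/-- The symmetries (coefficients `a l j`, permutations `π l j`, constants `b l`)
are compatible in dimension `k`: there exists an indexed object
`A : (Fin n → Fin k) → ℝ` satisfying, for every index assignment `ι`,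
`∑ j, a l j * A (ι ∘ π l j) = b l` for each symmetry `l`. -/
def Compatible (n k s : ℕ) (p : Fin s → ℕ)
    (a : (l : Fin s) → Fin (p l) → ℝ)
    (π : (l : Fin s) → Fin (p l) → Equiv.Perm (Fin n))
    (b : Fin s → ℝ) : Prop :=
  ∃ A : (Fin n → Fin k) → ℝ, ∀ (l : Fin s) (ι : Fin n → Fin k),
    ∑ j : Fin (p l), a l j * A (ι ∘ (π l j)) = b l

/-- if the symmetries are compatible in dimension `K`, they are
compatible in every dimension `k` with `1 ≤ k ≤ K`. -/
theorem compatible_of_le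
    (n s : ℕ) (hn : 1 ≤ n) (p : Fin s → ℕ)
    (a : (l : Fin s) → Fin (p l) → ℝ)
    (π : (l : Fin s) → Fin (p l) → Equiv.Perm (Fin n))
    (b : Fin s → ℝ) (K : ℕ)
    (hK : Compatible n K s p a π b) :
    ∀ k : ℕ, 1 ≤ k → k ≤ K → Compatible n k s p a π b := by
  intro k _ hkK
  obtain ⟨A, hA⟩ := hK
  exact ⟨fun ι => A (Fin.castLE hkK ∘ ι), fun l ι => hA l (Fin.castLE hkK ∘ ι)⟩
end

section
/- For all natural numbers n ≥ 1 and k ≥ 1, the sum over all partitions P of n having at most k parts of the quantity C(k, l) · l! / (∏_{v} (m_v)!) equals C(k+n−1, n), where l is the number of parts of P, the product ranges over the distinct part-values v of P, m_v is the multiplicity of the value v among the parts of P, and C(·,·) denotes the binomial coefficient. -/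
/-!
`C(k + n - 1, n)` counts `Sym (Fin k) n`, the multisets of size `n` over `k` letters. Sort them
by their shape `Nat.Partition.ofSym`, the partition of `n` formed by the multiplicities of the
letters. Recording the multiplicity of every letter, a multiset of shape `P` with `l` parts becomes
a map `Fin k → ℕ` whose values are the parts of `P` padded with `k - l` zeros. Such maps are the
arrangements of that multiset of values. `Perm (Fin k)` acts transitively on them, with stabilizer
`∏ Perm (fibre)`, so by orbit–stabilizer there are `k! / ((k - l)! ∏ m_v!) = C(k, l) · l! / ∏ m_v!`
of them.
-/

open Nat Finset

namespace Multiset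

section countPerms

variable {α : Type*} [DecidableEq α]

theorem countPerms_mul_prod_factorial_count (M : Multiset α) :
    M.countPerms * ∏ a ∈ M.toFinset, (M.count a)! = (card M)! := by
  have h := Nat.multinomial_spec M.toFinset M.count
  rwa [toFinset_sum_count_eq, mul_comm, ← Nat.multinomial_congr (fun _ _ => toFinsupp_apply M _),
    ← toFinsupp_support, ← Finsupp.multinomial_eq] at h

theorem countPerms_eq_factorial_div (M : Multiset α) :
    M.countPerms = (card M)! / ∏ a ∈ M.toFinset, (M.count a)! :=
  (Nat.div_eq_of_eq_mul_left (by positivity) (countPerms_mul_prod_factorial_count M).symm).symm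

theorem countPerms_add_replicate_of_notMem {a : α} {p : Multiset α} (ha : a ∉ p) (j : ℕ) :
    (p + replicate j a).countPerms = (card p + j).choose j * p.countPerms := by
  rw [countPerms_filter_ne a, count_add, count_eq_zero_of_notMem ha, count_replicate_self,
    zero_add, card_add, card_replicate, filter_add,
    filter_eq_self.2 fun b hb => (ne_of_mem_of_not_mem hb ha).symm,
    filter_eq_nil.2 fun b hb => not_not.2 (eq_of_mem_replicate hb).symm, add_zero]

theorem filter_ne_eq_iff {a : α} {M p : Multiset α} (ha : a ∉ p) :
    M.filter (· ≠ a) = p ↔ M = p + replicate (card M - card p) a := by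
  constructor
  · rintro rfl
    have hM : M = M.filter (· ≠ a) + replicate (M.count a) a := by
      conv_lhs => rw [← filter_add_not (· ≠ a) M]
      simp only [ne_eq, not_not, filter_eq']
    conv_lhs => rw [hM]
    have hcard := congrArg card hM
    rw [card_add, card_replicate] at hcard
    congr 2
    omega
  · intro h
    rw [h, filter_add, filter_eq_self.2 fun b hb => ne_of_mem_of_not_mem hb ha,
      filter_eq_nil.2 fun b hb => not_not.2 (eq_of_mem_replicate hb), add_zero]

end countPerms

section arrangements

variable {ι α : Type*} [Fintype ι]

theorem exists_map_univ_val_eq (M : Multiset α) (hM : card M = Fintype.card ι) :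
    ∃ f : ι → α, univ.val.map f = M := by
  let e : ι ≃ Fin M.toList.length := Fintype.equivFinOfCardEq (by rw [length_toList, hM])
  refine ⟨M.toList.get ∘ e, ?_⟩
  rw [← map_map, map_univ_val_equiv, Fin.univ_val_map, List.ofFn_get, coe_toList]

variable [DecidableEq α]

theorem count_map_univ_val (f : ι → α) (a : α) :
    (univ.val.map f).count a = Fintype.card {i // f i = a} := by
  rw [count_map, Fintype.card_subtype, card_def, filter_val]
  exact congrArg card (filter_congr fun _ _ => eq_comm)

theorem exists_perm_comp_eq_of_map_univ_val_eq {f g : ι → α}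
    (h : univ.val.map f = univ.val.map g) : ∃ σ : Equiv.Perm ι, f ∘ σ = g := by
  have e : ∀ a, {i // g i = a} ≃ {i // f i = a} := fun a =>
    Fintype.equivOfCardEq (by rw [← count_map_univ_val, ← count_map_univ_val, h])
  exact ⟨Equiv.ofFiberEquiv e, funext (Equiv.ofFiberEquiv_map e)⟩

open MulAction in
theorem natCard_map_univ_val_eq_countPerms (M : Multiset α) (hM : card M = Fintype.card ι) :
    Nat.card {f : ι → α // univ.val.map f = M} = M.countPerms := by
  classical
  obtain ⟨f, rfl⟩ := exists_map_univ_val_eq M hM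
  have horbit : orbit (Equiv.Perm ι)ᵈᵐᵃ f = {g | univ.val.map g = univ.val.map f} := by
    ext g
    constructor
    · rintro ⟨c, rfl⟩
      obtain ⟨σ, rfl⟩ := DomMulAct.mk.surjective c
      show univ.val.map (f ∘ σ) = _
      rw [← map_map, map_univ_val_equiv]
    · intro h
      obtain ⟨σ, hσ⟩ := exists_perm_comp_eq_of_map_univ_val_eq h.symm
      exact ⟨DomMulAct.mk σ, hσ⟩
  have hstab : Nat.card (stabilizer (Equiv.Perm ι)ᵈᵐᵃ f)
      = ∏ a ∈ (univ.val.map f).toFinset, ((univ.val.map f).count a)! := by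
    rw [← Nat.card_congr (Equiv.subtypeEquiv (p := fun σ : Equiv.Perm ι => f ∘ σ = f)
      DomMulAct.mk fun _ => Iff.rfl), Nat.card_eq_fintype_card, DomMulAct.stabilizer_card']
    exact prod_congr rfl fun a _ => by rw [count_map_univ_val]
  have key := (stabilizer (Equiv.Perm ι)ᵈᵐᵃ f).card_mul_index
  rw [index_stabilizer, horbit, ← Nat.card_coe_set_eq, hstab, Nat.card_congr DomMulAct.mk.symm,
    Nat.card_perm, Nat.card_eq_fintype_card (α := ι), ← hM,
    ← countPerms_mul_prod_factorial_count, mul_comm] at key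
  exact Nat.eq_of_mul_eq_mul_right (by positivity) key

end arrangements

end Multiset

namespace Nat.Partition

variable {σ : Type*} [Fintype σ] [DecidableEq σ] {n : ℕ}

theorem ofSym_parts_eq_filter (s : Sym σ n) :
    (ofSym s).parts = (univ.val.map fun a => (s : Multiset σ).count a).filter (· ≠ 0) := by
  have hsupp : univ.filter ((· ≠ 0) ∘ fun a => (s : Multiset σ).count a)
      = (s : Multiset σ).toFinset := by
    ext a
    simp
  rw [Multiset.filter_map, ← filter_val, hsupp, Multiset.toFinset_val]
  rfl

theorem card_parts_ofSym_le (s : Sym σ n) : Multiset.card (ofSym s).parts ≤ Fintype.card σ := by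
  rw [ofSym, Multiset.card_map, ← Multiset.toFinset_val]
  exact card_le_univ _

noncomputable def ofSymFiberEquiv (μ : n.Partition) :
    {s : Sym σ n // ofSym s = μ} ≃ {f : σ → ℕ // univ.val.map f
      = μ.parts + Multiset.replicate (Fintype.card σ - Multiset.card μ.parts) 0} :=
  ((Sym.equivNatSumOfFintype σ n).subtypeEquiv fun s => by
    rw [Nat.Partition.ext_iff, ofSym_parts_eq_filter,
      Multiset.filter_ne_eq_iff fun h => (μ.parts_pos h).false, Multiset.card_map]
    rfl).trans
  (Equiv.subtypeSubtypeEquivSubtype fun {f} hf => by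
    rw [sum_eq_multiset_sum, hf, Multiset.sum_add, Multiset.sum_replicate, smul_zero,
      add_zero, μ.parts_sum])

theorem natCard_ofSym_fiber (μ : n.Partition) (hμ : Multiset.card μ.parts ≤ Fintype.card σ) :
    Nat.card {s : Sym σ n // ofSym s = μ}
      = (Fintype.card σ).choose (Multiset.card μ.parts)
        * ((Multiset.card μ.parts)! / ∏ v ∈ μ.parts.toFinset, (μ.parts.count v)!) := by
  rw [Nat.card_congr (ofSymFiberEquiv μ),
    Multiset.natCard_map_univ_val_eq_countPerms _
      (by rw [Multiset.card_add, Multiset.card_replicate]; omega),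
    Multiset.countPerms_add_replicate_of_notMem fun h => (μ.parts_pos h).false,
    Nat.add_sub_cancel' hμ, choose_symm hμ, Multiset.countPerms_eq_factorial_div]

end Nat.Partition

theorem sum_over_partitions_eq_choose_general (n k : ℕ) :
    ∑ P ∈ Finset.univ.filter
        (fun P : Nat.Partition n => Multiset.card P.parts ≤ k),
      Nat.choose k (Multiset.card P.parts) *
        ((Multiset.card P.parts)! / ∏ v ∈ P.parts.toFinset, (P.parts.count v)!)
      = Nat.choose (k + n - 1) n := by
  calc _ = ∑ P ∈ univ.filter (fun P : n.Partition => Multiset.card P.parts ≤ k),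
          Nat.card {s : Sym (Fin k) n // Nat.Partition.ofSym s = P} :=
        sum_congr rfl fun P hP => by
          rw [Nat.Partition.natCard_ofSym_fiber P (by simpa using hP), Fintype.card_fin]
    _ = ∑ P, Nat.card {s : Sym (Fin k) n // Nat.Partition.ofSym s = P} :=
        sum_filter_of_ne fun P _ hP => by
          obtain ⟨s, rfl⟩ := (Nat.card_ne_zero.1 hP).1
          simpa using Nat.Partition.card_parts_ofSym_le s
    _ = Nat.card (Sym (Fin k) n) := by
        rw [← Nat.card_sigma, Nat.card_congr (Equiv.sigmaFiberEquiv _)]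
    _ = Nat.choose (k + n - 1) n := by
        rw [Nat.card_eq_fintype_card, Sym.card_sym_eq_choose, Fintype.card_fin]

/-- summing `C(k, l) * l! / ∏_v (m_v)!` over all partitions of
`n` with at most `k` parts (where `l` is the number of parts and `m_v` the
multiplicity of the distinct part-value `v`) gives `C(k+n-1, n)`. -/
theorem sum_over_partitions_eq_choose (n k : ℕ) (hn : 1 ≤ n) (hk : 1 ≤ k) :
    ∑ P ∈ Finset.univ.filter
        (fun P : Nat.Partition n => Multiset.card P.parts ≤ k),
      Nat.choose k (Multiset.card P.parts) *
        ((Multiset.card P.parts)! / ∏ v ∈ P.parts.toFinset, (P.parts.count v)!)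
      = Nat.choose (k + n - 1) n :=
  sum_over_partitions_eq_choose_general n k
end
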